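/- Fix T > 0, J ∈ ℕ, and real numbers β₁,…,β_J. Define weights v = (1/J)Σ_j β_j, and recursively w_ℓ = (β_ℓ − v − Σ_{ℓ'<ℓ} w_{ℓ'})/ρ(0) for ℓ = 1,…,J, where ρ(z) = 1/(1+e^{−z}). Define b_T(j) = v + Σ_{ℓ=1}^J w_ℓ ρ(T(j−ℓ)) for j ∈ {1,…,J}. Then lim_{T→∞} b_T(j) = β_j for every j ∈ {1,…,J}. -/

import Mathlib

/-
As `T → ∞`, `ρ(T(j - ℓ))` tends to `1` for `ℓ < j`, to `ρ(0) = 1/2` for `ℓ = j` and to `0` for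
`ℓ > j`. So `b_T(j)` tends to `v + ∑_{ℓ < j} w_ℓ + ρ(0) w_j`, and the recursion defining `w_j`
says exactly that this is `β_j`.
-/

open Finset Filter

noncomputable def logisticSigmoid (z : ℝ) : ℝ := 1 / (1 + Real.exp (-z))

open Real Topology

theorem logisticSigmoid_eq_sigmoid : logisticSigmoid = sigmoid :=
  funext fun _ => one_div _

theorem tendsto_sigmoid_mul_atTop_of_pos {c : ℝ} (hc : 0 < c) :
    Tendsto (fun T => sigmoid (T * c)) atTop (𝓝 1) :=
  tendsto_sigmoid_atTop.comp (tendsto_id.atTop_mul_const hc)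

theorem tendsto_sigmoid_mul_atTop_of_neg {c : ℝ} (hc : c < 0) :
    Tendsto (fun T => sigmoid (T * c)) atTop (𝓝 0) :=
  tendsto_sigmoid_atBot.comp (tendsto_id.atTop_mul_const_of_neg hc)

theorem Finset.sum_Icc_eq_sum_Ico_add_add_sum_Ioc {M : Type*} [AddCommMonoid M] (f : ℕ → M)
    {a j b : ℕ} (haj : a ≤ j) (hjb : j ≤ b) :
    ∑ i ∈ Icc a b, f i = ∑ i ∈ Ico a j, f i + f j + ∑ i ∈ Ioc j b, f i := by
  rw [← Ico_add_one_right_eq_Icc, ← sum_Ico_consecutive f haj (by omega : j ≤ b + 1),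
    sum_eq_sum_Ico_succ_bot (by omega : j < b + 1), ← add_assoc, Ico_add_one_add_one_eq_Ioc]

theorem tendsto_sum_mul_sigmoid_mul_sub (w : ℕ → ℝ) {a j b : ℕ} (haj : a ≤ j) (hjb : j ≤ b) :
    Tendsto (fun T : ℝ => ∑ ℓ ∈ Icc a b, w ℓ * sigmoid (T * ((j : ℝ) - ℓ))) atTop
      (𝓝 (∑ ℓ ∈ Ico a j, w ℓ + w j / 2)) := by
  have below : Tendsto (fun T : ℝ => ∑ ℓ ∈ Ico a j, w ℓ * sigmoid (T * ((j : ℝ) - ℓ))) atTop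
      (𝓝 (∑ ℓ ∈ Ico a j, w ℓ * 1)) :=
    tendsto_finsetSum _ fun ℓ hℓ => tendsto_const_nhds.mul <|
      tendsto_sigmoid_mul_atTop_of_pos <| sub_pos.2 <| Nat.cast_lt.2 (mem_Ico.1 hℓ).2
  have above : Tendsto (fun T : ℝ => ∑ ℓ ∈ Ioc j b, w ℓ * sigmoid (T * ((j : ℝ) - ℓ))) atTop
      (𝓝 (∑ ℓ ∈ Ioc j b, w ℓ * 0)) :=
    tendsto_finsetSum _ fun ℓ hℓ => tendsto_const_nhds.mul <|
      tendsto_sigmoid_mul_atTop_of_neg <| sub_neg.2 <| Nat.cast_lt.2 (mem_Ioc.1 hℓ).1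
  simp_rw [sum_Icc_eq_sum_Ico_add_add_sum_Ioc _ haj hjb, sub_self, mul_zero, sigmoid_zero]
  simpa [div_eq_mul_inv] using (below.add_const (w j * 2⁻¹)).add above

theorem initialization_interpolates_general
    (J : ℕ) (β : ℕ → ℝ) (v : ℝ)
    (w : ℕ → ℝ)
    (hw : ∀ ℓ ∈ Finset.Icc 1 J,
      w ℓ = (β ℓ - v - ∑ ℓ' ∈ Finset.Icc 1 (ℓ - 1), w ℓ') / logisticSigmoid 0) :
    ∀ j ∈ Finset.Icc 1 J,
      Tendsto (fun T : ℝ =>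
          v + ∑ ℓ ∈ Finset.Icc 1 J, w ℓ * logisticSigmoid (T * ((j : ℝ) - (ℓ : ℝ))))
        atTop (nhds (β j)) := by
  intro j hj
  obtain ⟨hj1, hjJ⟩ := mem_Icc.1 hj
  have hwj : w j / 2 = β j - v - ∑ ℓ ∈ Ico 1 j, w ℓ := by
    have hj_not_min : ¬IsMin j := by
      rw [isMin_iff_eq_bot]
      exact Nat.one_le_iff_ne_zero.1 hj1
    rw [hw j hj, logisticSigmoid_eq_sigmoid, sigmoid_zero,
      Icc_sub_one_right_eq_Ico_of_not_isMin hj_not_min]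
    ring
  rw [logisticSigmoid_eq_sigmoid]
  convert tendsto_const_nhds.add (tendsto_sum_mul_sigmoid_mul_sub w hj1 hjJ) using 2
  linarith

/-- The initialization scheme: a one-hidden-layer sigmoid network with steepness `T`
interpolates the prescribed values `β j` at integer points in the limit `T → ∞`. -/
theorem initialization_interpolates
    (J : ℕ) (hJ : 1 ≤ J) (β : ℕ → ℝ) (v : ℝ)
    (hv : v = (1 / (J : ℝ)) * ∑ i ∈ Finset.Icc 1 J, β i)
    (w : ℕ → ℝ)
    (hw : ∀ ℓ ∈ Finset.Icc 1 J,
      w ℓ = (β ℓ - v - ∑ ℓ' ∈ Finset.Icc 1 (ℓ - 1), w ℓ') / logisticSigmoid 0) :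
    ∀ j ∈ Finset.Icc 1 J,
      Tendsto (fun T : ℝ =>
          v + ∑ ℓ ∈ Finset.Icc 1 J, w ℓ * logisticSigmoid (T * ((j : ℝ) - (ℓ : ℝ))))
        atTop (nhds (β j)) :=
  initialization_interpolates_general J β v w hw
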